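/- arXiv:1809.02493 — 7 statements merged into one kernel-verified Lean document; each statement's English description precedes it below -/
import Mathlib

section
/- Let h : ℝⁿ → ℝⁿ be piecewise affine, and define the nonnegative matrix F̄ ∈ ℝ^{n×n} entrywise by F̄_{ij} := max_{λ∈Λ} |(F_λ)_{ij}|. Then for all c₁, c₂ ∈ ℝⁿ one has the entrywise inequality |h(c₁) − h(c₂)| ≤ F̄ |c₁ − c₂|. -/
open Matrix Filter Topology Set

/-! Restricted to the segment from `c₂` to `c₁`, every affine piece `F_λ` changes the `i`-th
coordinate of `h` at rate at most `(F̄ |c₁ - c₂|)_i`, because `|F_λ| ≤ F̄` entrywise. The pieces are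
closed and finitely many, so near any point of the segment all nearby points share a piece with it;
this local Lipschitz bound then integrates along the segment to the global one. -/

theorem abs_mulVec_le_mulVec_abs {m n : Type*} [Fintype n] {A B : Matrix m n ℝ}
    (hAB : ∀ i j, |A i j| ≤ B i j) (x : n → ℝ) : |A *ᵥ x| ≤ B *ᵥ |x| := fun i =>
  calc |∑ j, A i j * x j| ≤ ∑ j, |A i j * x j| := Finset.abs_sum_le_sum_abs _ _
    _ ≤ ∑ j, B i j * |x j| := Finset.sum_le_sum fun j _ => by
      rw [abs_mul]
      exact mul_le_mul_of_nonneg_right (hAB i j) (abs_nonneg _)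

/-- A neighbourhood of `x` misses every piece not containing `x`. -/
theorem eventually_nhds_of_isClosed_cover {X ι : Type*} [TopologicalSpace X] [Finite ι]
    {P : ι → Set X} (hP : ∀ l, IsClosed (P l)) (hcover : ∀ x, ∃ l, x ∈ P l)
    {R : X → X → Prop} (hR : ∀ l, ∀ x ∈ P l, ∀ y ∈ P l, R x y) (x : X) :
    ∀ᶠ y in 𝓝 x, R x y := by
  have hnear : ∀ᶠ y in 𝓝 x, ∀ l, y ∈ P l → x ∈ P l := eventually_all.2 fun l => by
    by_cases hx : x ∈ P l
    · exact Eventually.of_forall fun _ _ => hx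
    · exact ((hP l).isOpen_compl.eventually_mem hx).mono fun y hy hyl => absurd hyl hy
  filter_upwards [hnear] with y hy
  obtain ⟨l, hyl⟩ := hcover y
  exact hR l x (hy l hyl) y hyl

/-- The local bound caps the upper right Dini derivative of `t ↦ dist (φ t) (φ a)` by `K`. -/
theorem dist_le_mul_of_eventually_dist_le {E : Type*} [PseudoMetricSpace E] {φ : ℝ → E} {K : ℝ}
    (hφ : ∀ x, ∀ᶠ y in 𝓝 x, dist (φ x) (φ y) ≤ K * dist x y) (a b : ℝ) :
    dist (φ a) (φ b) ≤ K * dist a b := by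
  wlog hab : a ≤ b generalizing a b
  · rw [dist_comm, dist_comm a]
    exact this b a (le_of_not_ge hab)
  have hcont : Continuous φ := continuous_iff_continuousAt.2 fun x => by
    obtain ⟨r, hr, hball⟩ := Metric.eventually_nhds_iff.1 (hφ x)
    refine continuousAt_of_locally_lipschitz hr K fun y hy => ?_
    rw [dist_comm, dist_comm y]
    exact hball hy
  have hslope : ∀ x, ∀ r, K < r → ∃ᶠ z in 𝓝[>] x, slope (fun t => dist (φ t) (φ a)) x z < r := by
    intro x r hr
    refine Eventually.frequently ?_
    filter_upwards [self_mem_nhdsWithin, nhdsWithin_le_nhds (hφ x)] with z (hxz : x < z) hz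
    rw [slope_def_field, div_lt_iff₀ (sub_pos.2 hxz)]
    calc dist (φ z) (φ a) - dist (φ x) (φ a) ≤ dist (φ x) (φ z) := by
          linarith [dist_triangle (φ z) (φ x) (φ a), dist_comm (φ x) (φ z)]
      _ ≤ K * (z - x) := by rwa [Real.dist_eq, abs_sub_comm, abs_of_pos (sub_pos.2 hxz)] at hz
      _ < r * (z - x) := by gcongr
  have hdist := image_le_of_liminf_slope_right_le_deriv_boundary (B := fun t => K * (t - a))
    (hcont.dist continuous_const).continuousOn (by simp) (by fun_prop)
    (fun x _ => by simpa using ((hasDerivWithinAt_id x (Ici x)).sub_const a).const_mul K)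
    (fun x _ => hslope x) (right_mem_Icc.2 hab)
  rwa [dist_comm, dist_comm a, Real.dist_eq, abs_of_nonneg (sub_nonneg.2 hab)]

/-- For a piecewise affine function `h : ℝⁿ → ℝⁿ` with pieces
`h c = F_λ c + f_λ` on polyhedra covering `ℝⁿ`, letting `F̄` be the entrywise maximum
`F̄ i j = max_λ |(F_λ) i j|`, one has the entrywise bound `|h c₁ − h c₂| ≤ F̄ |c₁ − c₂|`. -/
theorem piecewise_affine_entrywise_bound
    {n : ℕ} {Λ : Type} [Fintype Λ]
    (h : (Fin n → ℝ) → (Fin n → ℝ))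
    (k : Λ → ℕ)
    (F : Λ → Matrix (Fin n) (Fin n) ℝ) (f : Λ → (Fin n → ℝ))
    (G : ∀ l : Λ, Matrix (Fin (k l)) (Fin n) ℝ) (g : ∀ l : Λ, Fin (k l) → ℝ)
    (hpiece : ∀ (l : Λ) (c : Fin n → ℝ),
      (∀ i, 0 ≤ ((G l).mulVec c + g l) i) → h c = (F l).mulVec c + f l)
    (hcover : ∀ c : Fin n → ℝ, ∃ l : Λ, ∀ i, 0 ≤ ((G l).mulVec c + g l) i)
    (Fbar : Matrix (Fin n) (Fin n) ℝ)
    (hFbar : ∀ i j, Fbar i j = ⨆ l : Λ, |F l i j|) :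
    ∀ c₁ c₂ : Fin n → ℝ, ∀ i,
      |h c₁ i - h c₂ i| ≤ Fbar.mulVec (fun j => |c₁ j - c₂ j|) i := by
  intro c₁ c₂ i
  let Ψ : Λ → Set (Fin n → ℝ) := fun l => {c | 0 ≤ G l *ᵥ c + g l}
  let γ : ℝ → Fin n → ℝ := fun t => c₂ + t • (c₁ - c₂)
  have hF : ∀ l i j, |F l i j| ≤ Fbar i j := fun l i j =>
    hFbar i j ▸ le_ciSup (Set.finite_range fun l => |F l i j|).bddAbove l
  have hsame : ∀ l, ∀ x ∈ Ψ l, ∀ y ∈ Ψ l, |h x - h y| ≤ Fbar *ᵥ |x - y| := by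
    intro l x hx y hy
    rw [hpiece l x hx, hpiece l y hy, add_sub_add_right_eq_sub, ← mulVec_sub]
    exact abs_mulVec_le_mulVec_abs (hF l) _
  have hγ_sub : ∀ s t, |γ s - γ t| = |s - t| • |c₁ - c₂| := fun s t => by
    ext j
    simp [γ, ← sub_smul, abs_mul]
  have hγ_cont : Continuous γ := continuous_const.add (continuous_id.smul continuous_const)
  have hΨ : ∀ l, IsClosed (γ ⁻¹' Ψ l) := fun l =>
    isClosed_le continuous_const ((continuous_const.matrix_mulVec hγ_cont).add continuous_const)
  have hlocal : ∀ t, ∀ᶠ s in 𝓝 t,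
      dist (h (γ t) i) (h (γ s) i) ≤ (Fbar *ᵥ |c₁ - c₂|) i * dist t s :=
    eventually_nhds_of_isClosed_cover hΨ (fun t => hcover (γ t)) fun l t ht s hs => by
      have := hsame l _ ht _ hs i
      rwa [hγ_sub, mulVec_smul, Pi.smul_apply, smul_eq_mul, mul_comm] at this
  have hend := dist_le_mul_of_eventually_dist_le hlocal 1 0
  simp only [γ, one_smul, add_sub_cancel, zero_smul, add_zero, Real.dist_eq, dist_zero_right,
    norm_one, mul_one] at hend
  exact hend
end

section
/- Let W ∈ ℝ^{n×n} and m ∈ ((0,∞])ⁿ, and for each d ∈ ℝⁿ let h(d) := {x ∈ ℝⁿ : x ≥ 0 and x = [W x + d]₀^m} be the set of equilibria of the linear-threshold dynamics τ ẋ = −x + [W x + d]₀^m. Suppose h(d) is a singleton for every d ∈ ℝⁿ, and regard h as a function ℝⁿ → ℝⁿ. Then h is globally Lipschitz on ℝⁿ. -/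
open Matrix

/-- Saturation `[x]₀^m = min{max{x,0}, m}` where the upper bound `m ∈ (0,∞]` is an
extended nonnegative real (`m = ⊤` means no upper saturation). -/
noncomputable def clampE (m : ENNReal) (x : ℝ) : ℝ :=
  if m = ⊤ then max x 0 else min (max x 0) m.toReal

/-- The Euclidean (`ℓ²`) norm of a vector in `Fin n → ℝ`. -/
noncomputable def euclNorm {n : ℕ} (v : Fin n → ℝ) : ℝ :=
  ‖(WithLp.equiv 2 (Fin n → ℝ)).symm v‖

/-!
Equilibria are fixed points of the projection `[·]₀^m`, which is firmly nonexpansive; hence for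
equilibria `x, x'` of inputs `d, d'` and `Δx = x - x'`, `Δd = d - d'`, every coordinate satisfies
`Δxᵢ ((I - W) Δx)ᵢ ≤ Δxᵢ Δdᵢ`. Uniqueness of equilibria forces `I - W` to be a P-matrix: a small
nonzero `w` whose sign `I - W` reverses yields an input with the two equilibria `w⁺ ≠ w⁻`. For a
P-matrix, compactness of the unit sphere gives `c > 0` with `c ‖v‖² ≤ maxᵢ vᵢ ((I - W) v)ᵢ`, so
`c ‖Δx‖² ≤ ‖Δx‖ ‖Δd‖` in the sup norm, and all norms on `ℝⁿ` are equivalent.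
-/

open Filter Topology

section Clamp

variable (m : ENNReal)

lemma clampE_nonneg (x : ℝ) : 0 ≤ clampE m x := by
  unfold clampE
  split_ifs
  · exact le_max_right _ _
  · exact le_min (le_max_right _ _) ENNReal.toReal_nonneg

lemma clampE_le_toReal (x : ℝ) (hm : m ≠ ⊤) : clampE m x ≤ m.toReal := by
  simp only [clampE, if_neg hm, min_le_right]

lemma clampE_eq_self {x : ℝ} (hx : 0 ≤ x) (hxm : m ≠ ⊤ → x ≤ m.toReal) : clampE m x = x := by
  unfold clampE
  split_ifs with hm
  · exact max_eq_left hx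
  · rw [max_eq_left hx, min_eq_left (hxm hm)]

lemma clampE_of_nonpos {x : ℝ} (hx : x ≤ 0) : clampE m x = 0 := by
  unfold clampE
  split_ifs
  · exact max_eq_right hx
  · rw [max_eq_right hx, min_eq_left ENNReal.toReal_nonneg]

/-- `clampE m` is the metric projection onto `[0, m]`, characterised by this variational
inequality. -/
lemma sub_clampE_mul_sub_clampE_nonpos (a : ℝ) {z : ℝ} (hz : 0 ≤ z) (hzm : m ≠ ⊤ → z ≤ m.toReal) :
    (a - clampE m a) * (z - clampE m a) ≤ 0 := by
  unfold clampE
  split_ifs with hm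
  · rcases le_or_gt a 0 with ha | ha
    · rw [max_eq_right ha]; nlinarith
    · simp [max_eq_left ha.le]
  · have hzm := hzm hm
    rcases le_or_gt a 0 with ha | ha
    · rw [max_eq_right ha, min_eq_left ENNReal.toReal_nonneg]; nlinarith
    · rw [max_eq_left ha.le]
      rcases le_or_gt a m.toReal with ham | ham
      · simp [min_eq_left ham]
      · rw [min_eq_right ham.le]; nlinarith

/-- Firm nonexpansiveness of the projection `clampE m`. -/
lemma clampE_sub_clampE_sq_le (a b : ℝ) :
    (clampE m a - clampE m b) ^ 2 ≤ (clampE m a - clampE m b) * (a - b) := by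
  have ha := sub_clampE_mul_sub_clampE_nonpos m a (clampE_nonneg m b) (clampE_le_toReal m b)
  have hb := sub_clampE_mul_sub_clampE_nonpos m b (clampE_nonneg m a) (clampE_le_toReal m a)
  nlinarith

lemma exists_clampE_eq_posPart_and_clampE_sub_eq_negPart {w : ℝ} (u : ℝ)
    (hwu : w * (w - u) ≤ 0) (hwm : m ≠ ⊤ → |w| ≤ m.toReal) :
    ∃ a, clampE m a = w⁺ ∧ clampE m (a - u) = w⁻ := by
  rcases lt_trichotomy w 0 with hw | rfl | hw
  · refine ⟨u - w, ?_, ?_⟩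
    · rw [clampE_of_nonpos m (by nlinarith), posPart_eq_zero.2 hw.le]
    · rw [sub_sub_cancel_left, negPart_eq_neg.2 hw.le,
        clampE_eq_self m (by linarith) fun h => (neg_le_abs w).trans (hwm h)]
  · refine ⟨min 0 u, ?_, ?_⟩
    · rw [clampE_of_nonpos m (min_le_left _ _), posPart_zero]
    · rw [clampE_of_nonpos m (sub_nonpos.2 (min_le_right _ _)), negPart_zero]
  · refine ⟨w, ?_, ?_⟩
    · rw [posPart_eq_self.2 hw.le, clampE_eq_self m hw.le fun h => (le_abs_self w).trans (hwm h)]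
    · rw [clampE_of_nonpos m (by nlinarith), negPart_eq_zero.2 hw.le]

end Clamp

namespace Matrix

variable {ι : Type*} [Fintype ι]

/-- A *P-matrix*, in the Fiedler–Pták characterisation (equivalent to all principal minors being
positive): it reverses the sign of no nonzero vector. -/
def IsPMatrix (A : Matrix ι ι ℝ) : Prop :=
  ∀ v ≠ 0, ∃ i, 0 < v i * (A *ᵥ v) i

lemma smul_apply_mul_mulVec_smul_apply (A : Matrix ι ι ℝ) (t : ℝ) (v : ι → ℝ) (i : ι) :
    (t • v) i * (A *ᵥ (t • v)) i = t ^ 2 * (v i * (A *ᵥ v) i) := by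
  simp only [mulVec_smul, Pi.smul_apply, smul_eq_mul]
  ring

/-- By compactness of the unit sphere, with homogeneity of degree two. -/
lemma IsPMatrix.exists_pos_mul_norm_sq_le {A : Matrix ι ι ℝ} (hA : A.IsPMatrix) :
    ∃ c > 0, ∀ v ≠ 0, ∃ i, c * ‖v‖ ^ 2 ≤ v i * (A *ᵥ v) i := by
  rcases isEmpty_or_nonempty ι with hι | hι
  · exact ⟨1, one_pos, fun v hv => absurd (Subsingleton.elim v 0) hv⟩
  set φ : (ι → ℝ) → ℝ := fun v => Finset.univ.sup' Finset.univ_nonempty fun i => v i * (A *ᵥ v) i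
  have hφ : Continuous φ := Continuous.finset_sup'_apply _ fun i _ =>
    (continuous_apply i).mul ((continuous_apply i).comp (Continuous.matrix_mulVec
      continuous_const continuous_id))
  obtain ⟨v₀, hv₀, hmin⟩ := (isCompact_sphere (0 : ι → ℝ) 1).exists_isMinOn
    (NormedSpace.sphere_nonempty.2 zero_le_one) hφ.continuousOn
  refine ⟨φ v₀, ?_, fun v hv => ?_⟩
  · obtain ⟨i, hi⟩ := hA v₀ (ne_zero_of_mem_sphere one_ne_zero ⟨v₀, hv₀⟩)
    exact hi.trans_le (Finset.le_sup' (fun j => v₀ j * (A *ᵥ v₀) j) (Finset.mem_univ i))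
  have hv' : 0 < ‖v‖ := norm_pos_iff.2 hv
  have hunit : ‖v‖⁻¹ • v ∈ Metric.sphere (0 : ι → ℝ) 1 := by
    rw [mem_sphere_zero_iff_norm, norm_smul, norm_inv, norm_norm, inv_mul_cancel₀ hv'.ne']
  obtain ⟨i, -, hi⟩ := Finset.exists_mem_eq_sup' Finset.univ_nonempty
    fun i => (‖v‖⁻¹ • v) i * (A *ᵥ (‖v‖⁻¹ • v)) i
  refine ⟨i, ?_⟩
  have hle : φ v₀ ≤ ‖v‖⁻¹ ^ 2 * (v i * (A *ᵥ v) i) := by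
    rw [← smul_apply_mul_mulVec_smul_apply, ← hi]
    exact hmin hunit
  rwa [inv_pow, le_inv_mul_iff₀ (by positivity), mul_comm] at hle

lemma IsPMatrix.exists_pos_mul_norm_le {A : Matrix ι ι ℝ} (hA : A.IsPMatrix) :
    ∃ c > 0, ∀ x d : ι → ℝ, (∀ i, x i * (A *ᵥ x) i ≤ x i * d i) → c * ‖x‖ ≤ ‖d‖ := by
  obtain ⟨c, hc, hcA⟩ := hA.exists_pos_mul_norm_sq_le
  refine ⟨c, hc, fun x d hxd => ?_⟩
  rcases eq_or_ne x 0 with rfl | hx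
  · simp
  obtain ⟨i, hi⟩ := hcA x hx
  have hx' : 0 < ‖x‖ := norm_pos_iff.2 hx
  have hsq : c * ‖x‖ * ‖x‖ ≤ ‖d‖ * ‖x‖ :=
    calc c * ‖x‖ * ‖x‖ = c * ‖x‖ ^ 2 := by ring
      _ ≤ x i * d i := hi.trans (hxd i)
      _ ≤ ‖x‖ * ‖d‖ := (le_abs_self _).trans <| by
          rw [abs_mul]; exact mul_le_mul (norm_le_pi_norm x i) (norm_le_pi_norm d i)
            (abs_nonneg _) (norm_nonneg _)
      _ = ‖d‖ * ‖x‖ := mul_comm _ _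
  exact le_of_mul_le_mul_right hsq hx'

end Matrix

section Equilibrium

variable {ι : Type*} [Fintype ι] (W : Matrix ι ι ℝ) (m : ι → ENNReal)

/-- `x` is an equilibrium of the linear-threshold dynamics `τ ẋ = -x + [W x + d]₀^m`. -/
def IsEquilibrium (d x : ι → ℝ) : Prop :=
  (∀ i, 0 ≤ x i) ∧ x = fun i => clampE (m i) ((W *ᵥ x + d) i)

variable {W m} [DecidableEq ι]

lemma IsEquilibrium.mul_one_sub_mulVec_le {d d' x x' : ι → ℝ} (hx : IsEquilibrium W m d x)
    (hx' : IsEquilibrium W m d' x') (i : ι) :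
    (x - x') i * ((1 - W) *ᵥ (x - x')) i ≤ (x - x') i * (d - d') i := by
  have hfirm := clampE_sub_clampE_sq_le (m i) ((W *ᵥ x + d) i) ((W *ᵥ x' + d') i)
  rw [← congrFun hx.2 i, ← congrFun hx'.2 i] at hfirm
  simp only [sub_mulVec, one_mulVec, mulVec_sub, Pi.sub_apply, Pi.add_apply] at hfirm ⊢
  linarith

variable (W m) in
lemma exists_isEquilibrium_posPart_negPart {w : ι → ℝ} (hw : ∀ i, w i * ((1 - W) *ᵥ w) i ≤ 0)
    (hwm : ∀ i, m i ≠ ⊤ → |w i| ≤ (m i).toReal) :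
    ∃ d, IsEquilibrium W m d w⁺ ∧ IsEquilibrium W m d w⁻ := by
  choose a ha using fun i => exists_clampE_eq_posPart_and_clampE_sub_eq_negPart (m i)
    ((W *ᵥ w) i) (by simpa [sub_mulVec] using hw i) (hwm i)
  have hsplit : W *ᵥ w = W *ᵥ w⁺ - W *ᵥ w⁻ := by rw [← mulVec_sub, posPart_sub_negPart]
  have hneg : W *ᵥ w⁻ + (a - W *ᵥ w⁺) = a - W *ᵥ w := by rw [hsplit]; abel
  refine ⟨a - W *ᵥ w⁺, ⟨fun i => posPart_nonneg (w i), funext fun i => ?_⟩,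
    ⟨fun i => negPart_nonneg (w i), funext fun i => ?_⟩⟩
  · simp [(ha i).1]
  · rw [hneg]
    exact (ha i).2.symm

/-- Two distinct equilibria `w⁺ ≠ w⁻` would arise from a small sign-reversed vector `w`. -/
lemma isPMatrix_one_sub_of_isEquilibrium_unique (hm : ∀ i, 0 < m i)
    (huniq : ∀ d x y, IsEquilibrium W m d x → IsEquilibrium W m d y → x = y) :
    (1 - W).IsPMatrix := by
  intro v hv
  by_contra! hrev
  have hsmall : ∀ᶠ δ in 𝓝[>] (0 : ℝ), ∀ i, m i ≠ ⊤ → δ * |v i| ≤ (m i).toReal := by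
    refine eventually_all.2 fun i => ?_
    by_cases hi : m i = ⊤
    · simp [hi]
    have hlim : Tendsto (fun δ : ℝ => δ * |v i|) (𝓝[>] 0) (𝓝 0) :=
      tendsto_nhdsWithin_of_tendsto_nhds <|
        (continuous_mul_const |v i|).tendsto' 0 0 (zero_mul _)
    exact (hlim.eventually (ge_mem_nhds (ENNReal.toReal_pos (hm i).ne' hi))).mono
      fun δ h _ => h
  obtain ⟨δ, hδm, hδ⟩ := (hsmall.and self_mem_nhdsWithin).exists
  obtain ⟨d, hpos, hneg⟩ := exists_isEquilibrium_posPart_negPart W m (w := δ • v)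
    (fun i => by
      rw [smul_apply_mul_mulVec_smul_apply]
      exact mul_nonpos_of_nonneg_of_nonpos (sq_nonneg δ) (hrev i))
    (fun i hi => by
      rw [Pi.smul_apply, smul_eq_mul, abs_mul, abs_of_pos hδ]
      exact hδm i hi)
  have hzero : δ • v = 0 := by
    rw [← posPart_sub_negPart (δ • v), huniq d _ _ hpos hneg, sub_self]
  exact hv ((smul_eq_zero.1 hzero).resolve_left hδ.ne')

lemma exists_lipschitzWith_of_isEquilibrium (hW : (1 - W).IsPMatrix) {h : (ι → ℝ) → ι → ℝ}
    (hfix : ∀ d, IsEquilibrium W m d (h d)) : ∃ K, LipschitzWith K h := by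
  obtain ⟨c, hc, hcW⟩ := hW.exists_pos_mul_norm_le
  refine ⟨_, LipschitzWith.of_dist_le' (K := c⁻¹) fun d d' => ?_⟩
  rw [dist_eq_norm, dist_eq_norm, le_inv_mul_iff₀ hc]
  exact hcW _ _ ((hfix d).mul_one_sub_mulVec_le (hfix d'))

end Equilibrium

lemma exists_euclNorm_sub_le_of_lipschitzWith {n : ℕ} {f : (Fin n → ℝ) → Fin n → ℝ} {K : NNReal}
    (hf : LipschitzWith K f) :
    ∃ L : ℝ, 0 ≤ L ∧ ∀ d d', euclNorm (f d - f d') ≤ L * euclNorm (d - d') := by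
  obtain ⟨L, hL⟩ : ∃ L, LipschitzWith L (WithLp.toLp 2 ∘ f ∘ WithLp.ofLp) :=
    ⟨_, ((PiLp.lipschitzWith_toLp 2 fun _ => ℝ).comp hf).comp (PiLp.lipschitzWith_ofLp 2 _)⟩
  refine ⟨L, L.2, fun d d' => ?_⟩
  simpa [euclNorm, dist_eq_norm] using hL.dist_le_mul (WithLp.toLp 2 d) (WithLp.toLp 2 d')

/-- If the equilibrium map `h(d) = {x ≥ 0 : x = [W x + d]₀^m}` of the
linear-threshold dynamics is single-valued on `ℝⁿ` (here: `h d` is an equilibrium for every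
`d`, and it is the unique one), then `h` is globally Lipschitz on `ℝⁿ`. -/
theorem equilibrium_map_globally_lipschitz
    {n : ℕ} (W : Matrix (Fin n) (Fin n) ℝ)
    (m : Fin n → ENNReal) (hm : ∀ i, 0 < m i)
    (h : (Fin n → ℝ) → (Fin n → ℝ))
    (hfix : ∀ d : Fin n → ℝ, (∀ i, 0 ≤ h d i) ∧
      h d = fun i => clampE (m i) ((W.mulVec (h d) + d) i))
    (huniq : ∀ (d x : Fin n → ℝ), (∀ i, 0 ≤ x i) →
      (x = fun i => clampE (m i) ((W.mulVec x + d) i)) → x = h d) :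
    ∃ L : ℝ, 0 ≤ L ∧ ∀ d d' : Fin n → ℝ,
      euclNorm (h d - h d') ≤ L * euclNorm (d - d') := by
  have hW : (1 - W).IsPMatrix := isPMatrix_one_sub_of_isEquilibrium_unique hm
    fun d x y hx hy => (huniq d x hx.1 hx.2).trans (huniq d y hy.1 hy.2).symm
  obtain ⟨K, hK⟩ := exists_lipschitzWith_of_isEquilibrium hW hfix
  exact exists_euclNorm_sub_le_of_lipschitzWith hK
end

section
/- Fix W ∈ ℝ^{n×n}, m ∈ (0,∞)ⁿ, and d ∈ ℝⁿ. For σ ∈ {0, ℓ, s}ⁿ let Σ^ℓ(σ) and Σ^s(σ) be the diagonal 0–1 matrices with (Σ^ℓ)_{ii} = 1 iff σ_i = ℓ and (Σ^s)_{ii} = 1 iff σ_i = s, and assume I − Σ^ℓ(σ) W is invertible for every σ ∈ {0, ℓ, s}ⁿ; set F_σ := (I − Σ^ℓ W)^{-1} Σ^ℓ and f_σ := (I − Σ^ℓ W)^{-1} Σ^s m. Then a vector x ∈ ℝⁿ satisfies x ≥ 0 and x = [W x + d]₀^m if and only if there exists σ ∈ {0, ℓ, s}ⁿ such that x = F_σ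 d + f_σ and, componentwise, (W x + d)_i ≤ 0 whenever σ_i = 0, 0 ≤ (W x + d)_i ≤ m_i whenever σ_i = ℓ, and (W x + d)_i ≥ m_i whenever σ_i = s. In particular, the equilibrium set {x ≥ 0 : x = [W x + d]₀^m} is a finite union of points of the affine form F_σ d + f_σ subject to finitely many affine inequality constraints on d. -/
/-!
On the region of switching patterns `σ`, the clamp `[y]₀^m` agrees with the affine map
`y ↦ Σℓ y + Σs m`: a coordinate with `σ i = 0` is clamped to `0`, one with `σ i = ℓ` is passed
through, and one with `σ i = s` is saturated at `m i`. Every `y` lies in the region of at least one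
pattern, so `x = [W x + d]₀^m` holds iff `x = Σℓ (W x + d) + Σs m` for a pattern consistent with
`W x + d`, i.e. `(I − Σℓ W) x = Σℓ d + Σs m`, which the invertibility of `I − Σℓ W` solves for `x`.
-/

open Matrix

namespace LinearThreshold

variable {ι : Type*}

/-- The saturated rectification `[y]₀^m`. -/
def clamp (m y : ι → ℝ) : ι → ℝ := fun i => min (max (y i) 0) (m i)

/-- Switching patterns are encoded as `σ : ι → Fin 3` with `0 ↦ 0`, `1 ↦ ℓ`, `2 ↦ s`. -/
def switchDiag [DecidableEq ι] (σ : ι → Fin 3) (k : Fin 3) : Matrix ι ι ℝ :=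
  diagonal fun i => if σ i = k then 1 else 0

def IsConsistentPattern (σ : ι → Fin 3) (m y : ι → ℝ) : Prop :=
  ∀ i, (σ i = 0 → y i ≤ 0) ∧ (σ i = 1 → 0 ≤ y i ∧ y i ≤ m i) ∧ (σ i = 2 → m i ≤ y i)

noncomputable def clampPattern (m y : ι → ℝ) : ι → Fin 3 := fun i =>
  if y i ≤ 0 then 0 else if y i ≤ m i then 1 else 2

lemma clamp_nonneg {m : ι → ℝ} (hm : ∀ i, 0 ≤ m i) (y : ι → ℝ) (i : ι) : 0 ≤ clamp m y i :=
  le_min (le_max_right _ _) (hm i)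

lemma isConsistentPattern_clampPattern (m y : ι → ℝ) :
    IsConsistentPattern (clampPattern m y) m y := by
  intro i
  unfold clampPattern
  split_ifs with h0 h1
  · simp [h0]
  · simp [(not_le.mp h0).le, h1]
  · simp [(not_le.mp h1).le]

lemma clamp_eq_of_isConsistentPattern [Fintype ι] [DecidableEq ι] {σ : ι → Fin 3}
    {m y : ι → ℝ} (hm : ∀ i, 0 ≤ m i) (hσ : IsConsistentPattern σ m y) :
    clamp m y = switchDiag σ 1 *ᵥ y + switchDiag σ 2 *ᵥ m := by
  funext i
  obtain ⟨h0, h1, h2⟩ := hσ i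
  simp only [clamp, switchDiag, Pi.add_apply, mulVec_diagonal]
  match hi : σ i with
  | 0 => simp [max_eq_right (h0 hi), hm i]
  | 1 => simp [max_eq_left (h1 hi).1, (h1 hi).2]
  | 2 => simp [(h2 hi).trans' (hm i), h2 hi]

lemma eq_inv_mulVec_iff_mulVec_eq [Fintype ι] [DecidableEq ι] {R : Type*} [CommRing R]
    {A : Matrix ι ι R} (hA : IsUnit A) {x b : ι → R} : x = A⁻¹ *ᵥ b ↔ A *ᵥ x = b := by
  have hdet := (isUnit_iff_isUnit_det A).mp hA
  constructor
  · rintro rfl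
    rw [mulVec_mulVec, mul_nonsing_inv A hdet, one_mulVec]
  · rintro rfl
    rw [mulVec_mulVec, nonsing_inv_mul A hdet, one_mulVec]

lemma eq_mulVec_add_iff_one_sub_mul_mulVec_eq [Fintype ι] [DecidableEq ι] {R : Type*}
    [CommRing R] (S W : Matrix ι ι R) (x d v : ι → R) :
    x = S *ᵥ (W *ᵥ x + d) + v ↔ (1 - S * W) *ᵥ x = S *ᵥ d + v := by
  rw [sub_mulVec, one_mulVec, ← mulVec_mulVec, mulVec_add, sub_eq_iff_eq_add, add_assoc,
    add_comm (S *ᵥ W *ᵥ x)]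

lemma eq_clamp_iff_eq_affine [Fintype ι] [DecidableEq ι] {σ : ι → Fin 3}
    {W : Matrix ι ι ℝ} {m d x : ι → ℝ} (hm : ∀ i, 0 ≤ m i)
    (hinv : IsUnit (1 - switchDiag σ 1 * W)) (hσ : IsConsistentPattern σ m (W *ᵥ x + d)) :
    x = clamp m (W *ᵥ x + d) ↔
      x = ((1 - switchDiag σ 1 * W)⁻¹ * switchDiag σ 1) *ᵥ d
        + (1 - switchDiag σ 1 * W)⁻¹ *ᵥ (switchDiag σ 2 *ᵥ m) := by
  rw [clamp_eq_of_isConsistentPattern hm hσ, ← mulVec_mulVec, ← mulVec_add,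
    eq_inv_mulVec_iff_mulVec_eq hinv, eq_mulVec_add_iff_one_sub_mul_mulVec_eq]

end LinearThreshold

open LinearThreshold in
/-- Characterization of the equilibria `x ≥ 0`, `x = [W x + d]₀^m` of a
linear-threshold network (with finite saturation bounds `m ∈ (0,∞)ⁿ`) as the piecewise affine
family `x = F_σ d + f_σ` indexed by switching patterns `σ ∈ {0, ℓ, s}ⁿ` (encoded as
`σ : Fin n → Fin 3` with `0 ↦ 0`, `1 ↦ ℓ`, `2 ↦ s`), subject to the corresponding affine
inequality constraints.  Here `Σℓ = diag(1_{σ_i = ℓ})`, `Σs = diag(1_{σ_i = s})`,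
`F_σ = (I − Σℓ W)⁻¹ Σℓ` and `f_σ = (I − Σℓ W)⁻¹ Σs m`. -/
theorem equilibria_piecewise_affine_characterization
    {n : ℕ} (W : Matrix (Fin n) (Fin n) ℝ)
    (m : Fin n → ℝ) (hm : ∀ i, 0 < m i) (d : Fin n → ℝ)
    (hinv : ∀ σ : Fin n → Fin 3,
      IsUnit (1 - (Matrix.diagonal fun i => if σ i = 1 then (1:ℝ) else 0) * W))
    (x : Fin n → ℝ) :
    ((∀ i, 0 ≤ x i) ∧ x = fun i => min (max ((W.mulVec x + d) i) 0) (m i))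
      ↔ ∃ σ : Fin n → Fin 3,
          (x = ((1 - (Matrix.diagonal fun i => if σ i = 1 then (1:ℝ) else 0) * W)⁻¹ *
                  (Matrix.diagonal fun i => if σ i = 1 then (1:ℝ) else 0)).mulVec d
               + (1 - (Matrix.diagonal fun i => if σ i = 1 then (1:ℝ) else 0) * W)⁻¹.mulVec
                   ((Matrix.diagonal fun i => if σ i = 2 then (1:ℝ) else 0).mulVec m))
          ∧ ∀ i, (σ i = 0 → (W.mulVec x + d) i ≤ 0)
               ∧ (σ i = 1 → 0 ≤ (W.mulVec x + d) i ∧ (W.mulVec x + d) i ≤ m i)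
               ∧ (σ i = 2 → m i ≤ (W.mulVec x + d) i) := by
  have hm₀ : ∀ i, 0 ≤ m i := fun i => (hm i).le
  constructor
  · rintro ⟨-, hx⟩
    have hσ := isConsistentPattern_clampPattern m (W *ᵥ x + d)
    exact ⟨_, (eq_clamp_iff_eq_affine hm₀ (hinv _) hσ).mp hx, hσ⟩
  · rintro ⟨σ, hx, hσ⟩
    have hx' : x = clamp m (W *ᵥ x + d) := (eq_clamp_iff_eq_affine hm₀ (hinv σ) hσ).mpr hx
    refine ⟨fun i => ?_, hx'⟩
    rw [hx']
    exact clamp_nonneg hm₀ _ i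
end

section
/- Let h : ℝⁿ → ℝⁿ be piecewise affine. Let W₁ ∈ ℝ^{n'×n'}, W₂ ∈ ℝ^{n'×n}, W₃ ∈ ℝ^{n×n'}, c̄ ∈ ℝⁿ, and m ∈ ((0,∞])^{n'}. Suppose that for every c' ∈ ℝ^{n'} the equation x = [W₁ x + W₂ h(W₃ x + c̄) + c']₀^m has a unique solution x ∈ ℝ^{n'}, and denote this solution by h'(c'). Then h' : ℝ^{n'} → ℝ^{n'} is itself piecewise affine: there exist a finite index set Λ' and, for each λ' ∈ Λ', a matrix F'_{λ'}, a matrix G'_{λ'}, and vectors f'_{λ'}, g'_{λ'} such that h'(c') = F'_{λ'} c' + f'_{λ'} for all c' ∈ Ψ'_{λ'} := {c' : G'_{λ'} c' + g'_{λ'} ≥ 0 componentwise}, and ⋃_{λ'∈Λ'} Ψ'_{λ'} = ℝ^{n'}. -/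
/-!
Write `Φ (c', x) = [W₁ x + W₂ h(W₃ x + c̄) + c']₀^m`; it is piecewise affine as a composition of
piecewise affine maps. On a piece `P` where `Φ` agrees with an affine map `φ`, the polyhedron
`R = P ∩ {(c', x) | x = φ (c', x)}` lies in the graph of `h'` by uniqueness of the fixed point.
A convex set that is a graph lies in the graph of an affine map `ψ` (the differences of its points
span a subspace on which the second coordinate is a linear function of the first), so `h' = ψ` on
`{c' | (c', ψ c') ∈ R}`, again a polyhedron. These sets cover `ℝ^{n'}`, since each `(c', h' c')`
lies in some piece.
-/

open Matrix

section ConvexGraph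

open Pointwise

variable {𝕜 E F : Type*} [Field 𝕜] [LinearOrder 𝕜] [IsStrictOrderedRing 𝕜]
  [AddCommGroup E] [Module 𝕜 E] [AddCommGroup F] [Module 𝕜 F]

theorem Convex.exists_smul_sub_of_mem_span_sub {C : Set E} (hC : Convex 𝕜 C) (hne : C.Nonempty)
    {u : E} (hu : u ∈ Submodule.span 𝕜 (C - C)) :
    ∃ t : 𝕜, 0 ≤ t ∧ ∃ p ∈ C, ∃ q ∈ C, u = t • (p - q) := by
  induction hu using Submodule.span_induction with
  | mem u hu =>
    obtain ⟨p, hp, q, hq, rfl⟩ := hu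
    exact ⟨1, zero_le_one, p, hp, q, hq, (one_smul 𝕜 _).symm⟩
  | zero =>
    obtain ⟨p, hp⟩ := hne
    exact ⟨0, le_rfl, p, hp, p, hp, (zero_smul 𝕜 _).symm⟩
  | smul a u _ ih =>
    obtain ⟨t, ht, p, hp, q, hq, rfl⟩ := ih
    rcases le_total 0 a with ha | ha
    · exact ⟨a * t, mul_nonneg ha ht, p, hp, q, hq, by rw [mul_smul]⟩
    · refine ⟨-a * t, mul_nonneg (neg_nonneg.mpr ha) ht, q, hq, p, hp, ?_⟩
      module
  | add u v _ _ ihu ihv =>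
    obtain ⟨t, ht, p, hp, q, hq, rfl⟩ := ihu
    obtain ⟨s, hs, p', hp', q', hq', rfl⟩ := ihv
    -- `t • C + s • C = (t + s) • C` for convex `C`
    obtain ⟨P, hP, hPeq⟩ := hC.exists_mem_add_smul_eq hp hp' ht hs
    obtain ⟨Q, hQ, hQeq⟩ := hC.exists_mem_add_smul_eq hq hq' ht hs
    refine ⟨t + s, add_nonneg ht hs, P, hP, Q, hQ, ?_⟩
    rw [smul_sub (t + s), hPeq, hQeq]
    module

theorem Convex.exists_affineMap_eq_of_injOn_fst {C : Set (E × F)} (hC : Convex 𝕜 C)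
    (hinj : Set.InjOn Prod.fst C) : ∃ φ : E →ᵃ[𝕜] F, ∀ z ∈ C, φ z.1 = z.2 := by
  rcases C.eq_empty_or_nonempty with rfl | ⟨z₀, hz₀⟩
  · exact ⟨0, by simp⟩
  set U := Submodule.span 𝕜 (C - C)
  have hU : ∀ u ∈ U, u.1 = 0 → u.2 = 0 := by
    intro u hu hu₁
    obtain ⟨t, -, p, hp, q, hq, rfl⟩ := hC.exists_smul_sub_of_mem_span_sub ⟨z₀, hz₀⟩ hu
    rcases eq_or_ne t 0 with rfl | ht
    · simp
    have hpq : p.1 = q.1 := by simpa [ht, sub_eq_zero] using hu₁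
    simp [hinj hp hq hpq]
  obtain ⟨L, hL⟩ := LinearMap.exists_extend U.toLinearPMap.toFun
  have hLU : ∀ u ∈ U, L u.1 = u.2 := by
    intro u hu
    rw [← Submodule.toLinearPMap_graph_eq U hU, LinearPMap.mem_graph_iff] at hu
    obtain ⟨y, hy₁, hy₂⟩ := hu
    rw [← hy₁, ← hy₂]
    exact LinearMap.congr_fun hL y
  refine ⟨L.toAffineMap + AffineMap.const 𝕜 E (z₀.2 - L z₀.1), fun z hz => ?_⟩
  have h := hLU (z - z₀) (Submodule.subset_span (Set.sub_mem_sub hz hz₀))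
  simp only [Prod.fst_sub, Prod.snd_sub, map_sub] at h
  simp only [AffineMap.coe_add, LinearMap.coe_toAffineMap, AffineMap.coe_const, Pi.add_apply,
    Function.const_apply]
  linear_combination (norm := module) h

end ConvexGraph

theorem AffineMap.apply_eq_mulVec_add {R ι κ : Type*} [CommRing R] [Fintype ι] [DecidableEq ι]
    (φ : (ι → R) →ᵃ[R] (κ → R)) (x : ι → R) :
    φ x = LinearMap.toMatrix' φ.linear *ᵥ x + φ 0 := by
  rw [LinearMap.toMatrix'_mulVec]
  exact congrFun φ.decomp x

section Polyhedron

variable (𝕜 : Type*) {E F : Type*} [Field 𝕜] [LinearOrder 𝕜]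
  [AddCommGroup E] [Module 𝕜 E] [AddCommGroup F] [Module 𝕜 F]

def IsPolyhedron (S : Set E) : Prop :=
  ∃ (ι : Type) (_ : Fintype ι) (φ : ι → E →ᵃ[𝕜] 𝕜), S = {x | ∀ i, 0 ≤ φ i x}

variable {𝕜}

theorem isPolyhedron_setOf_nonneg (φ : E →ᵃ[𝕜] 𝕜) : IsPolyhedron 𝕜 {x | 0 ≤ φ x} :=
  ⟨Unit, inferInstance, fun _ => φ, by simp⟩

theorem isPolyhedron_univ : IsPolyhedron 𝕜 (Set.univ : Set E) :=
  ⟨Empty, inferInstance, Empty.elim, by simp⟩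

theorem isPolyhedron_iInter {κ : Type} [Fintype κ] {S : κ → Set E}
    (hS : ∀ j, IsPolyhedron 𝕜 (S j)) : IsPolyhedron 𝕜 (⋂ j, S j) := by
  choose ι _ φ hφ using hS
  refine ⟨Σ j, ι j, inferInstance, fun p => φ p.1 p.2, ?_⟩
  ext x
  simp [hφ, Sigma.forall]

theorem IsPolyhedron.inter {S T : Set E} (hS : IsPolyhedron 𝕜 S) (hT : IsPolyhedron 𝕜 T) :
    IsPolyhedron 𝕜 (S ∩ T) := by
  rw [Set.inter_eq_iInter]
  exact isPolyhedron_iInter (Bool.forall_bool.mpr ⟨hT, hS⟩)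

theorem IsPolyhedron.preimage {S : Set F} (hS : IsPolyhedron 𝕜 S) (f : E →ᵃ[𝕜] F) :
    IsPolyhedron 𝕜 (f ⁻¹' S) := by
  obtain ⟨ι, _, φ, rfl⟩ := hS
  exact ⟨ι, inferInstance, fun i => (φ i).comp f, rfl⟩

theorem IsPolyhedron.convex [IsStrictOrderedRing 𝕜] {S : Set E} (hS : IsPolyhedron 𝕜 S) :
    Convex 𝕜 S := by
  obtain ⟨ι, _, φ, rfl⟩ := hS
  simp only [Set.ofPred_forall]
  exact convex_iInter fun i => (convex_Ici 0).affine_preimage (φ i)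

theorem isPolyhedron_setOf_eq [IsStrictOrderedRing 𝕜] {ι : Type} [Fintype ι]
    (φ ψ : E →ᵃ[𝕜] (ι → 𝕜)) :
    IsPolyhedron 𝕜 {x | φ x = ψ x} := by
  have h : {x | φ x = ψ x} = ⋂ i, {x | 0 ≤ (AffineMap.proj i).comp (ψ - φ) x} ∩
      {x | 0 ≤ (AffineMap.proj i).comp (φ - ψ) x} := by
    ext x
    simp [le_antisymm_iff, Pi.le_def, forall_and, sub_nonneg]
  rw [h]
  exact isPolyhedron_iInter fun i =>
    (isPolyhedron_setOf_nonneg _).inter (isPolyhedron_setOf_nonneg _)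

theorem isPolyhedron_setOf_mulVec_add {K N : ℕ} (G : Matrix (Fin K) (Fin N) 𝕜) (g : Fin K → 𝕜) :
    IsPolyhedron 𝕜 {x | ∀ i, 0 ≤ (G *ᵥ x + g) i} :=
  ⟨Fin K, inferInstance,
    fun i => (AffineMap.proj i).comp
      ((Matrix.toLin' G).toAffineMap + AffineMap.const 𝕜 (Fin N → 𝕜) g),
    by ext; simp⟩

theorem IsPolyhedron.exists_eq_setOf_mulVec_add {N : ℕ} {S : Set (Fin N → 𝕜)}
    (hS : IsPolyhedron 𝕜 S) :
    ∃ (K : ℕ) (G : Matrix (Fin K) (Fin N) 𝕜) (g : Fin K → 𝕜),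
      S = {x | ∀ i, 0 ≤ (G *ᵥ x + g) i} := by
  obtain ⟨ι, _, φ, rfl⟩ := hS
  set e := Fintype.equivFin ι
  set Φ := AffineMap.pi fun k => φ (e.symm k)
  refine ⟨_, LinearMap.toMatrix' Φ.linear, Φ 0, ?_⟩
  ext x
  simp only [Set.mem_ofPred_eq, ← Φ.apply_eq_mulVec_add, Φ, AffineMap.pi_apply]
  exact e.symm.forall_congr_right.symm

end Polyhedron

section PiecewiseAffine

variable (𝕜 : Type*) {E F G : Type*} [Field 𝕜] [LinearOrder 𝕜]
  [AddCommGroup E] [Module 𝕜 E] [AddCommGroup F] [Module 𝕜 F] [AddCommGroup G] [Module 𝕜 G]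

def IsPiecewiseAffine (f : E → F) : Prop :=
  ∃ (ι : Type) (_ : Fintype ι) (P : ι → Set E) (φ : ι → E →ᵃ[𝕜] F),
    (∀ i, IsPolyhedron 𝕜 (P i)) ∧ (∀ i, Set.EqOn f (φ i) (P i)) ∧ ∀ x, ∃ i, x ∈ P i

variable {𝕜}

theorem AffineMap.isPiecewiseAffine (φ : E →ᵃ[𝕜] F) : IsPiecewiseAffine 𝕜 φ :=
  ⟨Unit, inferInstance, fun _ => Set.univ, fun _ => φ, fun _ => isPolyhedron_univ,
    fun _ _ _ => rfl, fun _ => ⟨(), trivial⟩⟩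

theorem IsPiecewiseAffine.comp {g : F → G} {f : E → F} (hg : IsPiecewiseAffine 𝕜 g)
    (hf : IsPiecewiseAffine 𝕜 f) : IsPiecewiseAffine 𝕜 (fun x => g (f x)) := by
  obtain ⟨ι, _, P, φ, hP, hφ, hPcov⟩ := hf
  obtain ⟨κ, _, Q, ψ, hQ, hψ, hQcov⟩ := hg
  refine ⟨ι × κ, inferInstance, fun p => P p.1 ∩ φ p.1 ⁻¹' Q p.2, fun p => (ψ p.2).comp (φ p.1),
    fun p => (hP p.1).inter ((hQ p.2).preimage _), ?_, fun x => ?_⟩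
  · rintro ⟨i, j⟩ x ⟨hx, hx'⟩
    simp [hφ i hx, hψ j hx']
  · obtain ⟨i, hi⟩ := hPcov x
    obtain ⟨j, hj⟩ := hQcov (φ i x)
    exact ⟨(i, j), hi, hj⟩

theorem IsPiecewiseAffine.add {f g : E → F} (hf : IsPiecewiseAffine 𝕜 f)
    (hg : IsPiecewiseAffine 𝕜 g) : IsPiecewiseAffine 𝕜 (fun x => f x + g x) := by
  obtain ⟨ι, _, P, φ, hP, hφ, hPcov⟩ := hf
  obtain ⟨κ, _, Q, ψ, hQ, hψ, hQcov⟩ := hg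
  refine ⟨ι × κ, inferInstance, fun p => P p.1 ∩ Q p.2, fun p => φ p.1 + ψ p.2,
    fun p => (hP p.1).inter (hQ p.2), ?_, fun x => ?_⟩
  · rintro ⟨i, j⟩ x ⟨hx, hx'⟩
    simp [hφ i hx, hψ j hx']
  · obtain ⟨i, hi⟩ := hPcov x
    obtain ⟨j, hj⟩ := hQcov x
    exact ⟨(i, j), hi, hj⟩

theorem isPiecewiseAffine_pi_iff {κ : Type} [Fintype κ] {f : E → κ → F} :
    IsPiecewiseAffine 𝕜 f ↔ ∀ j, IsPiecewiseAffine 𝕜 (fun x => f x j) := by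
  classical
  refine ⟨fun hf j => (AffineMap.proj (k := 𝕜) (P := fun _ : κ => F) j).isPiecewiseAffine.comp hf,
    fun hf => ?_⟩
  choose ι _ P φ hP hφ hPcov using hf
  refine ⟨∀ j, ι j, inferInstance, fun s => ⋂ j, P j (s j),
    fun s => AffineMap.pi fun j => φ j (s j),
    fun s => isPolyhedron_iInter fun j => hP j (s j), fun s x hx => ?_, fun x => ?_⟩
  · funext j
    exact hφ j (s j) (Set.mem_iInter.mp hx j)
  · choose s hs using fun j => hPcov j x
    exact ⟨s, Set.mem_iInter.mpr hs⟩

variable [IsStrictOrderedRing 𝕜]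

theorem isPiecewiseAffine_of_halfSpaces {f : E → F} (α : E →ᵃ[𝕜] 𝕜) (φ ψ : E →ᵃ[𝕜] F)
    (hφ : ∀ x, 0 ≤ α x → f x = φ x) (hψ : ∀ x, 0 ≤ -α x → f x = ψ x) :
    IsPiecewiseAffine 𝕜 f :=
  ⟨Bool, inferInstance, fun b => {x | 0 ≤ cond b α (-α) x}, fun b => cond b φ ψ,
    fun _ => isPolyhedron_setOf_nonneg _, Bool.forall_bool.mpr ⟨hψ, hφ⟩,
    fun x => (le_total 0 (α x)).elim (fun h => ⟨true, h⟩) (fun h => ⟨false, neg_nonneg.mpr h⟩)⟩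

theorem AffineMap.isPiecewiseAffine_max (φ ψ : E →ᵃ[𝕜] 𝕜) :
    IsPiecewiseAffine 𝕜 (fun x => max (φ x) (ψ x)) :=
  isPiecewiseAffine_of_halfSpaces (φ - ψ) φ ψ
    (fun x hx => max_eq_left (by simpa using hx)) (fun x hx => max_eq_right (by simpa using hx))

theorem AffineMap.isPiecewiseAffine_min (φ ψ : E →ᵃ[𝕜] 𝕜) :
    IsPiecewiseAffine 𝕜 (fun x => min (φ x) (ψ x)) :=
  isPiecewiseAffine_of_halfSpaces (ψ - φ) φ ψ
    (fun x hx => min_eq_left (by simpa using hx)) (fun x hx => min_eq_right (by simpa using hx))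

theorem IsPiecewiseAffine.of_unique_fixedPoint {ι : Type} [Fintype ι]
    {Φ : E × (ι → 𝕜) → ι → 𝕜} (hΦ : IsPiecewiseAffine 𝕜 Φ) {g : E → ι → 𝕜}
    (hfix : ∀ c, g c = Φ (c, g c)) (huniq : ∀ c x, x = Φ (c, x) → x = g c) :
    IsPiecewiseAffine 𝕜 g := by
  obtain ⟨κ, _, P, φ, hP, hφ, hPcov⟩ := hΦ
  set R : κ → Set (E × (ι → 𝕜)) := fun i => P i ∩ {z | z.2 = φ i z}
  have hR : ∀ i, IsPolyhedron 𝕜 (R i) := fun i =>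
    (hP i).inter (isPolyhedron_setOf_eq AffineMap.snd (φ i))
  have hgraph : ∀ i, ∀ z ∈ R i, z.2 = g z.1 := fun i z hz =>
    huniq z.1 z.2 (hz.2.trans (hφ i hz.1).symm)
  have hinj : ∀ i, Set.InjOn Prod.fst (R i) := fun i z hz w hw h =>
    Prod.ext h (by rw [hgraph i z hz, hgraph i w hw, h])
  choose ψ hψ using fun i => (hR i).convex.exists_affineMap_eq_of_injOn_fst (hinj i)
  refine ⟨κ, inferInstance, fun i => (AffineMap.id 𝕜 E).prod (ψ i) ⁻¹' R i, ψ,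
    fun i => (hR i).preimage _, fun i c hc => (hgraph i _ hc).symm, fun c => ?_⟩
  obtain ⟨i, hi⟩ := hPcov (c, g c)
  have hmem : (c, g c) ∈ R i := ⟨hi, (hfix c).trans (hφ i hi)⟩
  refine ⟨i, ?_⟩
  simpa [hψ i _ hmem] using hmem

end PiecewiseAffine

theorem isPiecewiseAffine_clampE (m : ENNReal) : IsPiecewiseAffine ℝ (clampE m) := by
  have hmax := (AffineMap.id ℝ ℝ).isPiecewiseAffine_max (AffineMap.const ℝ ℝ (0 : ℝ))
  unfold clampE
  by_cases hm : m = ⊤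
  · simpa [hm] using hmax
  · simpa [hm] using
      ((AffineMap.id ℝ ℝ).isPiecewiseAffine_min (AffineMap.const ℝ ℝ m.toReal)).comp hmax

section Matrices

variable {𝕜 : Type*} [Field 𝕜] [LinearOrder 𝕜] {N p : ℕ}

theorem isPiecewiseAffine_of_mulVec_add {Λ : Type} [Fintype Λ] {h : (Fin N → 𝕜) → Fin p → 𝕜}
    {k : Λ → ℕ} {F : Λ → Matrix (Fin p) (Fin N) 𝕜} {f : Λ → Fin p → 𝕜}
    {G : ∀ l, Matrix (Fin (k l)) (Fin N) 𝕜} {g : ∀ l, Fin (k l) → 𝕜}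
    (hpiece : ∀ l c, (∀ i, 0 ≤ (G l *ᵥ c + g l) i) → h c = F l *ᵥ c + f l)
    (hcover : ∀ c, ∃ l, ∀ i, 0 ≤ (G l *ᵥ c + g l) i) : IsPiecewiseAffine 𝕜 h :=
  ⟨Λ, inferInstance, fun l => {c | ∀ i, 0 ≤ (G l *ᵥ c + g l) i},
    fun l => (Matrix.toLin' (F l)).toAffineMap + AffineMap.const 𝕜 (Fin N → 𝕜) (f l),
    fun l => isPolyhedron_setOf_mulVec_add _ _, fun l c hc => by simpa using hpiece l c hc, hcover⟩

theorem IsPiecewiseAffine.exists_mulVec_add {h : (Fin N → 𝕜) → Fin p → 𝕜}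
    (hh : IsPiecewiseAffine 𝕜 h) :
    ∃ (Λ : Type) (_ : Fintype Λ) (k : Λ → ℕ) (F : Λ → Matrix (Fin p) (Fin N) 𝕜)
      (f : Λ → Fin p → 𝕜) (G : ∀ l, Matrix (Fin (k l)) (Fin N) 𝕜) (g : ∀ l, Fin (k l) → 𝕜),
      (∀ l c, (∀ i, 0 ≤ (G l *ᵥ c + g l) i) → h c = F l *ᵥ c + f l) ∧
        ∀ c, ∃ l, ∀ i, 0 ≤ (G l *ᵥ c + g l) i := by
  obtain ⟨ι, _, P, φ, hP, hφ, hPcov⟩ := hh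
  choose k G g hG using fun i => (hP i).exists_eq_setOf_mulVec_add
  refine ⟨ι, inferInstance, k, fun i => LinearMap.toMatrix' (φ i).linear, fun i => φ i 0, G, g,
    fun i c hc => ?_, fun c => ?_⟩
  · rw [← AffineMap.apply_eq_mulVec_add]
    exact hφ i (by rw [hG i]; exact hc)
  · obtain ⟨i, hi⟩ := hPcov c
    exact ⟨i, by rw [hG i] at hi; exact hi⟩

end Matrices

theorem equilibrium_map_piecewise_affine_general
    {n n' : ℕ} {Λ : Type} [Fintype Λ]
    (h : (Fin n → ℝ) → (Fin n → ℝ))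
    (k : Λ → ℕ)
    (F : Λ → Matrix (Fin n) (Fin n) ℝ) (f : Λ → (Fin n → ℝ))
    (G : ∀ l : Λ, Matrix (Fin (k l)) (Fin n) ℝ) (g : ∀ l : Λ, Fin (k l) → ℝ)
    (hpiece : ∀ (l : Λ) (c : Fin n → ℝ),
      (∀ i, 0 ≤ ((G l).mulVec c + g l) i) → h c = (F l).mulVec c + f l)
    (hcover : ∀ c : Fin n → ℝ, ∃ l : Λ, ∀ i, 0 ≤ ((G l).mulVec c + g l) i)
    (W₁ : Matrix (Fin n') (Fin n') ℝ) (W₂ : Matrix (Fin n') (Fin n) ℝ)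
    (W₃ : Matrix (Fin n) (Fin n') ℝ) (cbar : Fin n → ℝ)
    (m : Fin n' → ENNReal)
    (h' : (Fin n' → ℝ) → (Fin n' → ℝ))
    (hfix : ∀ c' : Fin n' → ℝ, h' c' = fun i =>
      clampE (m i) ((W₁.mulVec (h' c') + W₂.mulVec (h (W₃.mulVec (h' c') + cbar)) + c') i))
    (huniq : ∀ (c' x : Fin n' → ℝ),
      (x = fun i =>
        clampE (m i) ((W₁.mulVec x + W₂.mulVec (h (W₃.mulVec x + cbar)) + c') i)) →
      x = h' c') :
    ∃ (Λ' : Type) (_ : Fintype Λ') (k' : Λ' → ℕ)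
      (F' : Λ' → Matrix (Fin n') (Fin n') ℝ) (f' : Λ' → (Fin n' → ℝ))
      (G' : ∀ l' : Λ', Matrix (Fin (k' l')) (Fin n') ℝ) (g' : ∀ l' : Λ', Fin (k' l') → ℝ),
      (∀ (l' : Λ') (c' : Fin n' → ℝ),
        (∀ i, 0 ≤ ((G' l').mulVec c' + g' l') i) → h' c' = (F' l').mulVec c' + f' l')
      ∧ (∀ c' : Fin n' → ℝ, ∃ l' : Λ', ∀ i, 0 ≤ ((G' l').mulVec c' + g' l') i) := by
  have hh : IsPiecewiseAffine ℝ h := isPiecewiseAffine_of_mulVec_add hpiece hcover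
  have hinner : IsPiecewiseAffine ℝ fun z : (Fin n' → ℝ) × (Fin n' → ℝ) =>
      W₂ *ᵥ h (W₃ *ᵥ z.2 + cbar) := by
    have hα := ((Matrix.toLin' W₃).toAffineMap.comp AffineMap.snd +
      AffineMap.const ℝ ((Fin n' → ℝ) × (Fin n' → ℝ)) cbar).isPiecewiseAffine
    simpa using (Matrix.toLin' W₂).toAffineMap.isPiecewiseAffine.comp (hh.comp hα)
  have hT : IsPiecewiseAffine ℝ fun z : (Fin n' → ℝ) × (Fin n' → ℝ) =>
      W₁ *ᵥ z.2 + W₂ *ᵥ h (W₃ *ᵥ z.2 + cbar) + z.1 := by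
    have hlin := ((Matrix.toLin' W₁).toAffineMap.comp
      (AffineMap.snd : (Fin n' → ℝ) × (Fin n' → ℝ) →ᵃ[ℝ] _)).isPiecewiseAffine
    simpa using (hlin.add hinner).add (AffineMap.fst : _ →ᵃ[ℝ] Fin n' → ℝ).isPiecewiseAffine
  have hΦ : IsPiecewiseAffine ℝ fun z : (Fin n' → ℝ) × (Fin n' → ℝ) => fun i =>
      clampE (m i) ((W₁ *ᵥ z.2 + W₂ *ᵥ h (W₃ *ᵥ z.2 + cbar) + z.1) i) :=
    isPiecewiseAffine_pi_iff.mpr fun i =>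
      (isPiecewiseAffine_clampE (m i)).comp (isPiecewiseAffine_pi_iff.mp hT i)
  exact (hΦ.of_unique_fixedPoint hfix huniq).exists_mulVec_add

/-- If `h : ℝⁿ → ℝⁿ` is piecewise affine and, for every `c' ∈ ℝ^{n'}`, the
equation `x = [W₁ x + W₂ h(W₃ x + c̄) + c']₀^m` has a unique solution `h'(c')`, then
`h' : ℝ^{n'} → ℝ^{n'}` is itself piecewise affine. -/
theorem equilibrium_map_piecewise_affine
    {n n' : ℕ} {Λ : Type} [Fintype Λ]
    (h : (Fin n → ℝ) → (Fin n → ℝ))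
    (k : Λ → ℕ)
    (F : Λ → Matrix (Fin n) (Fin n) ℝ) (f : Λ → (Fin n → ℝ))
    (G : ∀ l : Λ, Matrix (Fin (k l)) (Fin n) ℝ) (g : ∀ l : Λ, Fin (k l) → ℝ)
    (hpiece : ∀ (l : Λ) (c : Fin n → ℝ),
      (∀ i, 0 ≤ ((G l).mulVec c + g l) i) → h c = (F l).mulVec c + f l)
    (hcover : ∀ c : Fin n → ℝ, ∃ l : Λ, ∀ i, 0 ≤ ((G l).mulVec c + g l) i)
    (W₁ : Matrix (Fin n') (Fin n') ℝ) (W₂ : Matrix (Fin n') (Fin n) ℝ)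
    (W₃ : Matrix (Fin n) (Fin n') ℝ) (cbar : Fin n → ℝ)
    (m : Fin n' → ENNReal) (hm : ∀ i, 0 < m i)
    (h' : (Fin n' → ℝ) → (Fin n' → ℝ))
    (hfix : ∀ c' : Fin n' → ℝ, h' c' = fun i =>
      clampE (m i) ((W₁.mulVec (h' c') + W₂.mulVec (h (W₃.mulVec (h' c') + cbar)) + c') i))
    (huniq : ∀ (c' x : Fin n' → ℝ),
      (x = fun i =>
        clampE (m i) ((W₁.mulVec x + W₂.mulVec (h (W₃.mulVec x + cbar)) + c') i)) →
      x = h' c') :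
    ∃ (Λ' : Type) (_ : Fintype Λ') (k' : Λ' → ℕ)
      (F' : Λ' → Matrix (Fin n') (Fin n') ℝ) (f' : Λ' → (Fin n' → ℝ))
      (G' : ∀ l' : Λ', Matrix (Fin (k' l')) (Fin n') ℝ) (g' : ∀ l' : Λ', Fin (k' l') → ℝ),
      (∀ (l' : Λ') (c' : Fin n' → ℝ),
        (∀ i, 0 ≤ ((G' l').mulVec c' + g' l') i) → h' c' = (F' l').mulVec c' + f' l')
      ∧ (∀ c' : Fin n' → ℝ, ∃ l' : Λ', ∀ i, 0 ≤ ((G' l').mulVec c' + g' l') i) :=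
  equilibrium_map_piecewise_affine_general h k F f G g hpiece hcover W₁ W₂ W₃ cbar m h' hfix huniq
end

section
/- Let h : ℝⁿ → ℝⁿ and let F̄ ∈ ℝ^{n×n} be a nonnegative matrix such that |h(c₁) − h(c₂)| ≤ F̄ |c₁ − c₂| entrywise for all c₁, c₂ ∈ ℝⁿ. Let W₁ ∈ ℝ^{n'×n'}, W₂ ∈ ℝ^{n'×n}, W₃ ∈ ℝ^{n×n'}, and set A := |W₁| + |W₂| F̄ |W₃| with ρ := ρ(A). Suppose α ∈ ℝ^{n'} has all entries strictly positive and αᵀ A = ρ αᵀ (a positive left eigenvector of A for its spectral radius). Then for any w̄ ∈ ℝⁿ, c ∈ ℝ^{n'}, and m ∈ ((0,∞])^{n'}, the map T(x) := [W₁ x + W₂ h(W₃ x + w̄) + c]₀^m satisfies αᵀ |T(x) − T(x̂)| ≤ ρ · αᵀ |x − x̂| for all x, x̂ ∈ ℝ^{n'}; i.e., T is ρ-Lipschitz in the weighted norm ‖v‖_α := αᵀ|v|. -/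
open Matrix

/-- Spectral radius of a real matrix: the largest modulus of its complex eigenvalues. -/
noncomputable def specRad {n : ℕ} (A : Matrix (Fin n) (Fin n) ℝ) : ℝ :=
  (spectralRadius ℂ (A.map (Complex.ofReal ·))).toReal

/-- The comparison matrix `|W₁| + |W₂| F̄ |W₃|`, with `|·|` the entrywise absolute value. -/
noncomputable def gainMat {n n' : ℕ} (W₁ : Matrix (Fin n') (Fin n') ℝ)
    (W₂ : Matrix (Fin n') (Fin n) ℝ) (W₃ : Matrix (Fin n) (Fin n') ℝ)
    (Fbar : Matrix (Fin n) (Fin n) ℝ) : Matrix (Fin n') (Fin n') ℝ :=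
  W₁.map (fun a => |a|) + W₂.map (fun a => |a|) * Fbar * W₃.map (fun a => |a|)

/-- The map `T(x) = [W₁ x + W₂ h(W₃ x + w̄) + c]₀^m`. -/
noncomputable def Tmap {n n' : ℕ} (W₁ : Matrix (Fin n') (Fin n') ℝ)
    (W₂ : Matrix (Fin n') (Fin n) ℝ) (W₃ : Matrix (Fin n) (Fin n') ℝ)
    (h : (Fin n → ℝ) → (Fin n → ℝ)) (wbar : Fin n → ℝ) (c : Fin n' → ℝ)
    (m : Fin n' → ENNReal) (x : Fin n' → ℝ) : Fin n' → ℝ :=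
  fun i => clampE (m i) ((W₁.mulVec x + W₂.mulVec (h (W₃.mulVec x + wbar)) + c) i)

/-
The saturation `[·]₀^m` is 1-Lipschitz, so entrywise `|T x - T x̂|` is bounded by the
difference of the pre-activations, which the triangle inequality and the comparison bound on `h`
dominate by `A |x - x̂|` with `A = |W₁| + |W₂| F̄ |W₃|`. Pairing with the nonnegative left
eigenvector `α` turns `αᵀ A` into `ρ αᵀ`.
-/

lemma abs_clampE_sub_clampE_le (m : ENNReal) (a b : ℝ) :
    |clampE m a - clampE m b| ≤ |a - b| := by
  unfold clampE
  split
  · exact abs_max_sub_max_le_abs a b 0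
  · calc |min (max a 0) m.toReal - min (max b 0) m.toReal| ≤ |max a 0 - max b 0| := by
          simpa using abs_min_sub_min_le_max (max a 0) m.toReal (max b 0) m.toReal
      _ ≤ |a - b| := abs_max_sub_max_le_abs a b 0

section NonnegMatrix

variable {R ι κ : Type*} [CommRing R] [LinearOrder R] [IsStrictOrderedRing R] [Fintype κ]

lemma abs_mulVec_le_map_abs_mulVec_abs (M : Matrix ι κ R) (y : κ → R) :
    |M *ᵥ y| ≤ M.map abs *ᵥ |y| := fun i => by
  simpa [mulVec, dotProduct, abs_mul] using Finset.abs_sum_le_sum_abs (fun j => M i j * y j) _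

lemma mulVec_le_mulVec_of_nonneg {M : Matrix ι κ R} (hM : ∀ i j, 0 ≤ M i j) {y z : κ → R}
    (hyz : y ≤ z) :
    M *ᵥ y ≤ M *ᵥ z := fun i =>
  dotProduct_le_dotProduct_of_nonneg_left hyz (hM i)

lemma dotProduct_le_mul_dotProduct_of_le_mulVec {A : Matrix κ κ R} {α u v : κ → R}
    {ρ : R} (hα : 0 ≤ α) (heig : α ᵥ* A = ρ • α) (huv : u ≤ A *ᵥ v) :
    α ⬝ᵥ u ≤ ρ * (α ⬝ᵥ v) :=
  calc α ⬝ᵥ u ≤ α ⬝ᵥ (A *ᵥ v) := dotProduct_le_dotProduct_of_nonneg_left huv hα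
    _ = ρ * (α ⬝ᵥ v) := by rw [dotProduct_mulVec, heig, smul_dotProduct, smul_eq_mul]

end NonnegMatrix

section Tmap

variable {n n' : ℕ} {h : (Fin n → ℝ) → (Fin n → ℝ)} {Fbar : Matrix (Fin n) (Fin n) ℝ}
  (W₁ : Matrix (Fin n') (Fin n') ℝ) (W₂ : Matrix (Fin n') (Fin n) ℝ)
  (W₃ : Matrix (Fin n) (Fin n') ℝ) (wbar : Fin n → ℝ) (c : Fin n' → ℝ)

lemma abs_preactivation_sub_le (hFnn : ∀ i j, 0 ≤ Fbar i j)
    (hFlip : ∀ c₁ c₂, |h c₁ - h c₂| ≤ Fbar *ᵥ |c₁ - c₂|) (x xh : Fin n' → ℝ) :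
    |(W₁ *ᵥ x + W₂ *ᵥ h (W₃ *ᵥ x + wbar) + c)
        - (W₁ *ᵥ xh + W₂ *ᵥ h (W₃ *ᵥ xh + wbar) + c)|
      ≤ gainMat W₁ W₂ W₃ Fbar *ᵥ |x - xh| := by
  set u := W₃ *ᵥ x + wbar
  set uh := W₃ *ᵥ xh + wbar
  have hu : u - uh = W₃ *ᵥ (x - xh) := by simp [u, uh, mulVec_sub]
  have hh : |h u - h uh| ≤ (Fbar * W₃.map abs) *ᵥ |x - xh| := by
    rw [← mulVec_mulVec]
    exact (hFlip u uh).trans <|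
      mulVec_le_mulVec_of_nonneg hFnn (hu ▸ abs_mulVec_le_map_abs_mulVec_abs W₃ (x - xh))
  calc _ = |W₁ *ᵥ (x - xh) + W₂ *ᵥ (h u - h uh)| := by
          rw [mulVec_sub, mulVec_sub]; congr 1; abel
    _ ≤ |W₁ *ᵥ (x - xh)| + |W₂ *ᵥ (h u - h uh)| := abs_add_le _ _
    _ ≤ W₁.map abs *ᵥ |x - xh| + W₂.map abs *ᵥ ((Fbar * W₃.map abs) *ᵥ |x - xh|) :=
          add_le_add (abs_mulVec_le_map_abs_mulVec_abs W₁ _) <|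
            (abs_mulVec_le_map_abs_mulVec_abs W₂ _).trans
              (mulVec_le_mulVec_of_nonneg (fun i j => abs_nonneg (W₂ i j)) hh)
    _ = gainMat W₁ W₂ W₃ Fbar *ᵥ |x - xh| := by
          rw [gainMat, add_mulVec, mulVec_mulVec, Matrix.mul_assoc]

lemma abs_Tmap_sub_le (m : Fin n' → ENNReal) (hFnn : ∀ i j, 0 ≤ Fbar i j)
    (hFlip : ∀ c₁ c₂, |h c₁ - h c₂| ≤ Fbar *ᵥ |c₁ - c₂|) (x xh : Fin n' → ℝ) :
    |Tmap W₁ W₂ W₃ h wbar c m x - Tmap W₁ W₂ W₃ h wbar c m xh|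
      ≤ gainMat W₁ W₂ W₃ Fbar *ᵥ |x - xh| := fun i =>
  (abs_clampE_sub_clampE_le (m i) _ _).trans
    (abs_preactivation_sub_le W₁ W₂ W₃ wbar c hFnn hFlip x xh i)

end Tmap

theorem clamp_map_contraction_in_weighted_norm_general
    {n n' : ℕ}
    (h : (Fin n → ℝ) → (Fin n → ℝ))
    (Fbar : Matrix (Fin n) (Fin n) ℝ) (hFnn : ∀ i j, 0 ≤ Fbar i j)
    (hFlip : ∀ (c₁ c₂ : Fin n → ℝ) (i : Fin n),
      |h c₁ i - h c₂ i| ≤ Fbar.mulVec (fun j => |c₁ j - c₂ j|) i)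
    (W₁ : Matrix (Fin n') (Fin n') ℝ) (W₂ : Matrix (Fin n') (Fin n) ℝ)
    (W₃ : Matrix (Fin n) (Fin n') ℝ)
    (ρ : ℝ)
    (α : Fin n' → ℝ) (hα : ∀ i, 0 < α i)
    (heig : Matrix.vecMul α (gainMat W₁ W₂ W₃ Fbar) = ρ • α)
    (wbar : Fin n → ℝ) (c : Fin n' → ℝ)
    (m : Fin n' → ENNReal) :
    ∀ x xh : Fin n' → ℝ,
      ∑ i, α i * |Tmap W₁ W₂ W₃ h wbar c m x i - Tmap W₁ W₂ W₃ h wbar c m xh i|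
        ≤ ρ * ∑ i, α i * |x i - xh i| := fun x xh =>
  dotProduct_le_mul_dotProduct_of_le_mulVec (fun i => (hα i).le) heig
    (abs_Tmap_sub_le W₁ W₂ W₃ wbar c m hFnn hFlip x xh)

/-- If `|h(c₁) − h(c₂)| ≤ F̄|c₁ − c₂|` entrywise (`F̄ ≥ 0`), and `α > 0` is a
left eigenvector of `A := |W₁| + |W₂| F̄ |W₃|` for its spectral radius `ρ = ρ(A)`, then
`T(x) = [W₁ x + W₂ h(W₃ x + w̄) + c]₀^m` is `ρ`-Lipschitz in the weighted norm
`‖v‖_α = αᵀ|v|`. -/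
theorem clamp_map_contraction_in_weighted_norm
    {n n' : ℕ}
    (h : (Fin n → ℝ) → (Fin n → ℝ))
    (Fbar : Matrix (Fin n) (Fin n) ℝ) (hFnn : ∀ i j, 0 ≤ Fbar i j)
    (hFlip : ∀ (c₁ c₂ : Fin n → ℝ) (i : Fin n),
      |h c₁ i - h c₂ i| ≤ Fbar.mulVec (fun j => |c₁ j - c₂ j|) i)
    (W₁ : Matrix (Fin n') (Fin n') ℝ) (W₂ : Matrix (Fin n') (Fin n) ℝ)
    (W₃ : Matrix (Fin n) (Fin n') ℝ)
    (ρ : ℝ) (hρ : ρ = specRad (gainMat W₁ W₂ W₃ Fbar))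
    (α : Fin n' → ℝ) (hα : ∀ i, 0 < α i)
    (heig : Matrix.vecMul α (gainMat W₁ W₂ W₃ Fbar) = ρ • α)
    (wbar : Fin n → ℝ) (c : Fin n' → ℝ)
    (m : Fin n' → ENNReal) (hm : ∀ i, 0 < m i) :
    ∀ x xh : Fin n' → ℝ,
      ∑ i, α i * |Tmap W₁ W₂ W₃ h wbar c m x i - Tmap W₁ W₂ W₃ h wbar c m xh i|
        ≤ ρ * ∑ i, α i * |x i - xh i| :=
  clamp_map_contraction_in_weighted_norm_general h Fbar hFnn hFlip W₁ W₂ W₃ ρ α hα heig wbar c m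
end

section
/- Let A ∈ ℝ^{n×n} be entrywise nonnegative and suppose α ∈ ℝⁿ has strictly positive entries and satisfies αᵀ A = ρ αᵀ for some ρ ≥ 0. Let τ > 0 and let B : [0,∞) → ℝ^{n×n} be such that |B(t)| ≤ A entrywise for all t ≥ 0. Then every differentiable ξ : [0,∞) → ℝⁿ satisfying τ ξ̇(t) = B(t) ξ(t) for all t ≥ 0 obeys αᵀ|ξ(t)| ≤ αᵀ|ξ(0)| · e^{ρ t/τ} for all t ≥ 0. -/
/-!
The weighted ℓ¹ seminorm `V x = αᵀ|x|` is a linear Lyapunov function for the system: entrywise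
`|B(t) x| ≤ A |x|`, so `αᵀ|B(t) x| ≤ αᵀ A |x| = ρ V x`. Hence the right Dini derivative of
`V ∘ ξ` is at most `(ρ/τ) V ∘ ξ`, and Gronwall's inequality gives the exponential bound.
-/

open Matrix Set Filter Topology

section SeminormGronwall

variable {E : Type*} [NormedAddCommGroup E] [NormedSpace ℝ E] {p : Seminorm ℝ E}

theorem HasDerivWithinAt.liminf_right_slope_seminorm_le (hp : Continuous p)
    {f : ℝ → E} {f' : E} {x r : ℝ} (hf : HasDerivWithinAt f f' (Ici x) x) (hr : p f' < r) :
    ∃ᶠ z in 𝓝[>] x, (z - x)⁻¹ * (p (f z) - p (f x)) < r := by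
  have hslope : Tendsto (fun z => p (slope f x z)) (𝓝[>] x) (𝓝 (p f')) :=
    (hp.tendsto f').comp ((hasDerivWithinAt_iff_tendsto_slope' (lt_irrefl x)).1 hf.Ioi_of_Ici)
  refine Eventually.frequently ?_
  filter_upwards [hslope.eventually_lt_const hr, self_mem_nhdsWithin] with z hz (hxz : x < z)
  calc (z - x)⁻¹ * (p (f z) - p (f x)) ≤ (z - x)⁻¹ * p (f z - f x) := by
        gcongr
        exact le_of_abs_le (abs_sub_map_le_sub p _ _)
    _ = p (slope f x z) := by
        rw [slope_def_module, map_smul_eq_mul, Real.norm_of_nonneg (inv_pos.2 (sub_pos.2 hxz)).le]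
    _ < r := hz

theorem Seminorm.le_gronwallBound_of_deriv_right_le (hp : Continuous p) {f f' : ℝ → E}
    {δ K ε a b : ℝ} (hf : ContinuousOn f (Icc a b))
    (hf' : ∀ x ∈ Ico a b, HasDerivWithinAt f (f' x) (Ici x) x) (ha : p (f a) ≤ δ)
    (bound : ∀ x ∈ Ico a b, p (f' x) ≤ K * p (f x) + ε) :
    ∀ x ∈ Icc a b, p (f x) ≤ gronwallBound δ K ε (x - a) :=
  le_gronwallBound_of_liminf_deriv_right_le (hp.comp_continuousOn hf)
    (fun x hx _ hr => (hf' x hx).liminf_right_slope_seminorm_le hp hr) ha bound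

end SeminormGronwall

theorem Matrix.abs_mulVec_le {R m n : Type*} [Fintype n] [Ring R] [LinearOrder R]
    [IsOrderedRing R] {A B : Matrix m n R} (hB : ∀ i j, |B i j| ≤ A i j) (x : n → R) :
    |B *ᵥ x| ≤ A *ᵥ |x| := fun i =>
  calc |∑ j, B i j * x j| ≤ ∑ j, |B i j * x j| := Finset.abs_sum_le_sum_abs _ _
    _ ≤ ∑ j, A i j * |x j| := Finset.sum_le_sum fun j _ => by
        rw [abs_mul]; exact mul_le_mul_of_nonneg_right (hB i j) (abs_nonneg _)

section WeightedL1

variable {ι : Type*} [Fintype ι]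

noncomputable def weightedL1Seminorm (α : ι → ℝ) (hα : 0 ≤ α) : Seminorm ℝ (ι → ℝ) :=
  Seminorm.of (fun x => α ⬝ᵥ |x|)
    (fun x y => by
      rw [← dotProduct_add]
      exact dotProduct_le_dotProduct_of_nonneg_left (abs_add_le x y) hα)
    (fun c x => by
      have habs_smul : |c • x| = |c| • |x| := funext fun i => abs_mul c (x i)
      rw [habs_smul, dotProduct_smul, Real.norm_eq_abs, smul_eq_mul])

variable {α : ι → ℝ} {hα : 0 ≤ α}

theorem continuous_weightedL1Seminorm : Continuous (weightedL1Seminorm α hα) :=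
  continuous_const.dotProduct (continuous_pi fun i => (continuous_apply i).abs)

theorem weightedL1Seminorm_mulVec_le {A B : Matrix ι ι ℝ} {ρ : ℝ} (heig : vecMul α A = ρ • α)
    (hB : ∀ i j, |B i j| ≤ A i j) (x : ι → ℝ) :
    weightedL1Seminorm α hα (B *ᵥ x) ≤ ρ * weightedL1Seminorm α hα x :=
  calc α ⬝ᵥ |B *ᵥ x| ≤ α ⬝ᵥ (A *ᵥ |x|) :=
        dotProduct_le_dotProduct_of_nonneg_left (abs_mulVec_le hB x) hα
    _ = ρ * (α ⬝ᵥ |x|) := by rw [dotProduct_mulVec, heig, smul_dotProduct, smul_eq_mul]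

end WeightedL1

theorem weighted_abs_gronwall_bound_general
    {n : ℕ} (A : Matrix (Fin n) (Fin n) ℝ)
    (α : Fin n → ℝ) (hα : ∀ i, 0 < α i)
    (ρ : ℝ)
    (heig : Matrix.vecMul α A = ρ • α)
    (τ : ℝ) (hτ : 0 < τ)
    (B : ℝ → Matrix (Fin n) (Fin n) ℝ)
    (hB : ∀ t ≥ (0:ℝ), ∀ i j, |B t i j| ≤ A i j)
    (ξ : ℝ → (Fin n → ℝ))
    (hξ : ∀ t ∈ Set.Ici (0:ℝ),
      HasDerivWithinAt ξ (τ⁻¹ • (B t).mulVec (ξ t)) (Set.Ici (0:ℝ)) t) :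
    ∀ t ≥ (0:ℝ),
      ∑ i, α i * |ξ t i| ≤ (∑ i, α i * |ξ 0 i|) * Real.exp (ρ * t / τ) := by
  intro t ht
  have hα' : 0 ≤ α := fun i => (hα i).le
  have hcont : ContinuousOn ξ (Icc 0 t) := fun s hs =>
    (hξ s hs.1).continuousWithinAt.mono Icc_subset_Ici_self
  have hderiv : ∀ s ∈ Ico 0 t, HasDerivWithinAt ξ (τ⁻¹ • B s *ᵥ ξ s) (Ici s) s := fun s hs =>
    (hξ s hs.1).mono (Ici_subset_Ici.2 hs.1)
  have hbound : ∀ s ∈ Ico 0 t, weightedL1Seminorm α hα' (τ⁻¹ • B s *ᵥ ξ s) ≤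
      τ⁻¹ * ρ * weightedL1Seminorm α hα' (ξ s) + 0 := fun s hs => by
    rw [map_smul_eq_mul, Real.norm_of_nonneg (inv_nonneg.2 hτ.le), add_zero, mul_assoc]
    exact mul_le_mul_of_nonneg_left (weightedL1Seminorm_mulVec_le heig (hB s hs.1) _)
      (inv_nonneg.2 hτ.le)
  have hgronwall := (weightedL1Seminorm α hα').le_gronwallBound_of_deriv_right_le
    continuous_weightedL1Seminorm hcont hderiv le_rfl hbound t ⟨ht, le_rfl⟩
  rwa [gronwallBound_ε0, sub_zero, inv_mul_eq_div, div_mul_eq_mul_div] at hgronwall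

/-- (Gronwall-type comparison lemma.) If `A ≥ 0` entrywise, `α > 0` with
`αᵀ A = ρ αᵀ` for some `ρ ≥ 0`, `τ > 0`, and `|B(t)| ≤ A` entrywise for all `t ≥ 0`, then
every differentiable solution of `τ ξ̇(t) = B(t) ξ(t)` on `[0,∞)` obeys
`αᵀ|ξ(t)| ≤ αᵀ|ξ(0)| e^{ρ t/τ}`. -/
theorem weighted_abs_gronwall_bound
    {n : ℕ} (A : Matrix (Fin n) (Fin n) ℝ) (hA : ∀ i j, 0 ≤ A i j)
    (α : Fin n → ℝ) (hα : ∀ i, 0 < α i)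
    (ρ : ℝ) (hρ : 0 ≤ ρ)
    (heig : Matrix.vecMul α A = ρ • α)
    (τ : ℝ) (hτ : 0 < τ)
    (B : ℝ → Matrix (Fin n) (Fin n) ℝ)
    (hB : ∀ t ≥ (0:ℝ), ∀ i j, |B t i j| ≤ A i j)
    (ξ : ℝ → (Fin n → ℝ))
    (hξ : ∀ t ∈ Set.Ici (0:ℝ),
      HasDerivWithinAt ξ (τ⁻¹ • (B t).mulVec (ξ t)) (Set.Ici (0:ℝ)) t) :
    ∀ t ≥ (0:ℝ),
      ∑ i, α i * |ξ t i| ≤ (∑ i, α i * |ξ 0 i|) * Real.exp (ρ * t / τ) :=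
  weighted_abs_gronwall_bound_general A α hα ρ heig τ hτ B hB ξ hξ
end

section
/- Let f : ℝⁿ → ℝⁿ be globally Lipschitz with Lipschitz constant L > 0 and f(0) = 0, let τ > 0, and let ψ be the global flow of τ ẋ = f(x). Assume global exponential stability of the origin: there exist k, μ > 0 such that ‖ψ(t; x)‖ ≤ k‖x‖ e^{−μ t} for all t ≥ 0 and x ∈ ℝⁿ. Then for every δ > 0 the function V̂(x) := ∫₀^δ ‖ψ(t; x)‖² dt satisfies, for all x ∈ ℝⁿ, the quadratic bounds (τ/(2L))(1 − e^{−2Lδ/τ}) ‖x‖² ≤ V̂(x) ≤ (k²/(2μ)) ‖x‖². -/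
/-!
Since `f` is `L`-Lipschitz with `f 0 = 0`, the speed of a trajectory is at most `(L/τ) ‖ψ t x‖`;
Grönwall's inequality run backwards in time from `ψ t x` to `x` gives
`‖x‖ e^{-Lt/τ} ≤ ‖ψ(t; x)‖`. Squaring this and the exponential-stability bound and integrating
`e^{-2ct}` over `[0, δ]` yields the two quadratic bounds.
-/

open Real Set intervalIntegral

lemma integral_sq_mul_exp_neg_mul {c : ℝ} (hc : c ≠ 0) (a δ : ℝ) :
    ∫ t in (0:ℝ)..δ, (a * exp (-c * t)) ^ 2 = a ^ 2 / (2 * c) * (1 - exp (-2 * c * δ)) := by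
  have hsq : ∀ t, (a * exp (-c * t)) ^ 2 = a ^ 2 * exp (-2 * c * t) := fun t => by
    rw [mul_pow, ← exp_nat_mul]; ring_nf
  simp_rw [hsq]
  rw [integral_const_mul, integral_comp_mul_left (fun t => exp t) (by simpa using hc), integral_exp,
    mul_zero, exp_zero, smul_eq_mul]
  field_simp
  ring

section

variable {E : Type*} [NormedAddCommGroup E]

lemma norm_mul_exp_neg_le_norm_of_norm_deriv_le [NormedSpace ℝ E] {γ γ' : ℝ → E} {K t : ℝ}
    (hγ : ∀ s, HasDerivAt γ (γ' s) s) (hK : ∀ s, ‖γ' s‖ ≤ K * ‖γ s‖) (ht : 0 ≤ t) :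
    ‖γ 0‖ * exp (-K * t) ≤ ‖γ t‖ := by
  have hrev : ∀ s, HasDerivAt (fun s => γ (t - s)) (-γ' (t - s)) s := fun s => by
    simpa [Function.comp_def] using (hγ (t - s)).scomp s ((hasDerivAt_id s).const_sub t)
  have hbound := norm_le_gronwallBound_of_norm_deriv_right_le (ε := 0) (a := 0) (b := t)
    (fun s _ => (hrev s).continuousAt.continuousWithinAt) (fun s _ => (hrev s).hasDerivWithinAt)
    le_rfl (fun s _ => by simpa using hK (t - s)) t ⟨ht, le_rfl⟩
  rw [gronwallBound_ε0, sub_self, sub_zero] at hbound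
  rw [neg_mul, exp_neg, ← div_eq_mul_inv, div_le_iff₀ (exp_pos _)]
  exact hbound

variable {g : ℝ → E} {a c δ : ℝ}

lemma sq_div_mul_one_sub_exp_le_integral_norm_sq (hc : c ≠ 0) (hδ : 0 ≤ δ) (hg : Continuous g)
    (ha : 0 ≤ a) (hlow : ∀ t ∈ Icc 0 δ, a * exp (-c * t) ≤ ‖g t‖) :
    a ^ 2 / (2 * c) * (1 - exp (-2 * c * δ)) ≤ ∫ t in (0:ℝ)..δ, ‖g t‖ ^ 2 := by
  rw [← integral_sq_mul_exp_neg_mul hc]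
  refine integral_mono_on hδ ((by fun_prop : Continuous _).intervalIntegrable _ _)
    ((by fun_prop : Continuous _).intervalIntegrable _ _) fun t ht => ?_
  gcongr
  exact hlow t ht

lemma integral_norm_sq_le_sq_div (hc : 0 < c) (hδ : 0 ≤ δ) (hg : Continuous g)
    (hup : ∀ t ∈ Icc 0 δ, ‖g t‖ ≤ a * exp (-c * t)) :
    ∫ t in (0:ℝ)..δ, ‖g t‖ ^ 2 ≤ a ^ 2 / (2 * c) := calc
  ∫ t in (0:ℝ)..δ, ‖g t‖ ^ 2 ≤ ∫ t in (0:ℝ)..δ, (a * exp (-c * t)) ^ 2 :=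
    integral_mono_on hδ ((by fun_prop : Continuous _).intervalIntegrable _ _)
    ((by fun_prop : Continuous _).intervalIntegrable _ _) fun t ht => by gcongr; exact hup t ht
  _ = a ^ 2 / (2 * c) * (1 - exp (-2 * c * δ)) := integral_sq_mul_exp_neg_mul hc.ne' a δ
  _ ≤ a ^ 2 / (2 * c) := mul_le_of_le_one_right (by positivity) (by linarith [exp_pos (-2 * c * δ)])

end

theorem lyapunov_candidate_quadratic_bounds_general
    {n : ℕ} (f : EuclideanSpace ℝ (Fin n) → EuclideanSpace ℝ (Fin n))
    (L : ℝ) (hL : 0 < L)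
    (hf : ∀ x y : EuclideanSpace ℝ (Fin n), ‖f x - f y‖ ≤ L * ‖x - y‖)
    (hf0 : f 0 = 0)
    (τ : ℝ) (hτ : 0 < τ)
    (ψ : ℝ → EuclideanSpace ℝ (Fin n) → EuclideanSpace ℝ (Fin n))
    (hψ0 : ∀ x, ψ 0 x = x)
    (hψd : ∀ (t : ℝ) (x : EuclideanSpace ℝ (Fin n)),
      HasDerivAt (fun s => ψ s x) (τ⁻¹ • f (ψ t x)) t)
    (k μ : ℝ) (hμ : 0 < μ)
    (hGES : ∀ t ≥ (0:ℝ), ∀ x : EuclideanSpace ℝ (Fin n),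
      ‖ψ t x‖ ≤ k * ‖x‖ * Real.exp (-μ * t)) :
    ∀ δ > (0:ℝ), ∀ x : EuclideanSpace ℝ (Fin n),
      (τ / (2 * L)) * (1 - Real.exp (-2 * L * δ / τ)) * ‖x‖ ^ 2
          ≤ ∫ t in (0:ℝ)..δ, ‖ψ t x‖ ^ 2
      ∧ ∫ t in (0:ℝ)..δ, ‖ψ t x‖ ^ 2 ≤ (k ^ 2 / (2 * μ)) * ‖x‖ ^ 2 := by
  intro δ hδ x
  have hspeed : ∀ y, ‖τ⁻¹ • f y‖ ≤ L / τ * ‖y‖ := fun y => by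
    rw [norm_smul, norm_inv, norm_of_nonneg hτ.le, div_eq_inv_mul, mul_assoc]
    gcongr
    simpa [hf0] using hf y 0
  have hcont : Continuous fun t => ψ t x :=
    continuous_iff_continuousAt.mpr fun t => (hψd t x).continuousAt
  constructor
  · have hlow := sq_div_mul_one_sub_exp_le_integral_norm_sq (div_pos hL hτ).ne' hδ.le hcont
      (norm_nonneg x) fun t ht => by
        simpa [hψ0] using norm_mul_exp_neg_le_norm_of_norm_deriv_le (hψd · x)
          (fun s => hspeed (ψ s x)) ht.1
    convert hlow using 1
    field_simp
  · calc ∫ t in (0:ℝ)..δ, ‖ψ t x‖ ^ 2 ≤ (k * ‖x‖) ^ 2 / (2 * μ) :=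
          integral_norm_sq_le_sq_div hμ hδ.le hcont fun t ht => hGES t ht.1 x
      _ = k ^ 2 / (2 * μ) * ‖x‖ ^ 2 := by ring

/-- Let `f` be globally Lipschitz with constant `L > 0`, `f(0) = 0`, and
let `ψ` be the global flow of `τ ẋ = f(x)`.  If the origin is globally exponentially stable
(`‖ψ(t; x)‖ ≤ k‖x‖ e^{−μt}` for `t ≥ 0`), then for every `δ > 0` the function
`V̂(x) = ∫₀^δ ‖ψ(t; x)‖² dt` satisfies
`(τ/(2L))(1 − e^{−2Lδ/τ}) ‖x‖² ≤ V̂(x) ≤ (k²/(2μ)) ‖x‖²`. -/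
theorem lyapunov_candidate_quadratic_bounds
    {n : ℕ} (f : EuclideanSpace ℝ (Fin n) → EuclideanSpace ℝ (Fin n))
    (L : ℝ) (hL : 0 < L)
    (hf : ∀ x y : EuclideanSpace ℝ (Fin n), ‖f x - f y‖ ≤ L * ‖x - y‖)
    (hf0 : f 0 = 0)
    (τ : ℝ) (hτ : 0 < τ)
    (ψ : ℝ → EuclideanSpace ℝ (Fin n) → EuclideanSpace ℝ (Fin n))
    (hψ0 : ∀ x, ψ 0 x = x)
    (hψd : ∀ (t : ℝ) (x : EuclideanSpace ℝ (Fin n)),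
      HasDerivAt (fun s => ψ s x) (τ⁻¹ • f (ψ t x)) t)
    (hgrp : ∀ (t s : ℝ) (x : EuclideanSpace ℝ (Fin n)), ψ t (ψ s x) = ψ (t + s) x)
    (k μ : ℝ) (hk : 0 < k) (hμ : 0 < μ)
    (hGES : ∀ t ≥ (0:ℝ), ∀ x : EuclideanSpace ℝ (Fin n),
      ‖ψ t x‖ ≤ k * ‖x‖ * Real.exp (-μ * t)) :
    ∀ δ > (0:ℝ), ∀ x : EuclideanSpace ℝ (Fin n),
      (τ / (2 * L)) * (1 - Real.exp (-2 * L * δ / τ)) * ‖x‖ ^ 2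
          ≤ ∫ t in (0:ℝ)..δ, ‖ψ t x‖ ^ 2
      ∧ ∫ t in (0:ℝ)..δ, ‖ψ t x‖ ^ 2 ≤ (k ^ 2 / (2 * μ)) * ‖x‖ ^ 2 :=
  lyapunov_candidate_quadratic_bounds_general f L hL hf hf0 τ hτ ψ hψ0 hψd k μ hμ hGES
end
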